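/- Let m^* = lim_{φ → +∞} f^*(φ) and M^* = lim_{φ → −∞} f^*(φ), and suppose ρ_0 ∈ (−M^*, −m^*). Then there exists a unique real number φ^* with ρ_0 + f^*(φ^*) = 0, and the unique real numbers φ̂_Λ satisfying ρ_0 + f_Λ(φ̂_Λ) = 0 converge to φ^* as Λ → ∞. -/

import Mathlib

/-!
Write `x = log c₀` and `a j = λ_j / λ₀`, so that every concentration is
`c_j = exp (a j * x + μ̄_j - z_j * φ)` (this is `Electrolyte.conc`). Then
`(∑ λ_j c_j, -λ₀ ∑ z_j c_j)` is `λ₀` times the gradient of the convex function `∑ c_j` of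
`(x, φ)`, and monotonicity of that gradient drives everything. Along the constraint
`∑ λ_j c_j = μ̃₀` defining `c₀*` it makes `f*` strictly decreasing (strictly because `z₀ = 0`
while some `z_i ≠ 0`), so `ρ₀ + f*` has exactly one zero by the intermediate value theorem.
Along the constraint `x + Λ λ₀ ∑ λ_j c_j = const` defining `c_{0,Λ}` it makes `f_Λ` decreasing.
The latter constraint forces `c_{0,Λ}(φ) → c₀*(φ)` as `Λ → ∞`, hence `f_Λ → f*` pointwise, and
zeros of decreasing functions converging to a strictly decreasing limit converge to its zero.
-/

open Filter Real Set Topology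

theorem exp_sub_exp_mul_sub_nonneg (u v : ℝ) : 0 ≤ (exp v - exp u) * (v - u) := by
  rcases le_total u v with h | h
  · exact mul_nonneg (sub_nonneg.2 (exp_le_exp.2 h)) (sub_nonneg.2 h)
  · exact mul_nonneg_of_nonpos_of_nonpos (sub_nonpos.2 (exp_le_exp.2 h)) (sub_nonpos.2 h)

theorem eq_of_exp_sub_exp_mul_sub_eq_zero {u v : ℝ} (h : (exp v - exp u) * (v - u) = 0) :
    u = v := by
  rcases mul_eq_zero.1 h with h | h
  · exact exp_injective (sub_eq_zero.1 h).symm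
  · exact (sub_eq_zero.1 h).symm

theorem continuous_of_strictMono_of_apply_eq {g : ℝ → ℝ → ℝ} {X : ℝ → ℝ} {C : ℝ}
    (hmono : ∀ φ, StrictMono fun x => g x φ) (hcont : ∀ x, Continuous (g x))
    (hX : ∀ φ, g (X φ) φ = C) : Continuous X := by
  refine continuous_iff_continuousAt.2 fun φ₀ => tendsto_order.2 ⟨fun a ha => ?_, fun b hb => ?_⟩
  · have hlt : g a φ₀ < C := hX φ₀ ▸ hmono φ₀ ha
    filter_upwards [(hcont a).continuousAt.eventually_lt continuousAt_const hlt] with φ hφ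
    exact (hmono φ).lt_iff_lt.1 (hφ.trans_eq (hX φ).symm)
  · have hlt : C < g b φ₀ := hX φ₀ ▸ hmono φ₀ hb
    filter_upwards [continuousAt_const.eventually_lt (hcont b).continuousAt hlt] with φ hφ
    exact (hmono φ).lt_iff_lt.1 ((hX φ).trans_lt hφ)

theorem tendsto_of_add_mul_eq {g : ℝ → ℝ} (hg : StrictMono g) {X : ℝ → ℝ} {x₀ y κ β : ℝ}
    (hκ : 0 < κ) (hx₀ : g x₀ = y) (hX : ∀ᶠ t in atTop, X t + t * κ * g (X t) = t * κ * y + β) :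
    Tendsto X atTop (𝓝 x₀) := by
  subst hx₀
  refine tendsto_order.2 ⟨fun a ha => ?_, fun b hb => ?_⟩
  · have hδ : 0 < κ * (g x₀ - g a) := mul_pos hκ (sub_pos.2 (hg ha))
    filter_upwards [hX, eventually_ge_atTop 0,
      (tendsto_id.atTop_mul_const hδ).eventually_gt_atTop (a - β)] with t ht ht₀ hta
    by_contra! hle
    have := mul_le_mul_of_nonneg_left (hg.monotone hle) (mul_nonneg ht₀ hκ.le)
    simp only [id] at hta
    nlinarith
  · have hδ : 0 < κ * (g b - g x₀) := mul_pos hκ (sub_pos.2 (hg hb))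
    filter_upwards [hX, eventually_ge_atTop 0,
      (tendsto_id.atTop_mul_const hδ).eventually_gt_atTop (β - b)] with t ht ht₀ htb
    by_contra! hle
    have := mul_le_mul_of_nonneg_left (hg.monotone hle) (mul_nonneg ht₀ hκ.le)
    simp only [id] at htb
    nlinarith

theorem tendsto_of_antitone_of_tendsto_strictAnti {α : Type*} {l : Filter α}
    {f : α → ℝ → ℝ} {g : ℝ → ℝ} {ψ : α → ℝ} {x₀ : ℝ}
    (hf : ∀ᶠ t in l, Antitone (f t)) (hlim : ∀ x, Tendsto (fun t => f t x) l (𝓝 (g x)))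
    (hg : StrictAnti g) (hψ : ∀ᶠ t in l, f t (ψ t) = g x₀) : Tendsto ψ l (𝓝 x₀) := by
  refine tendsto_order.2 ⟨fun a ha => ?_, fun b hb => ?_⟩
  · filter_upwards [hf, hψ, (hlim a).eventually_const_lt (hg ha)] with t hft hψt hat
    by_contra! hle
    linarith [hft hle]
  · filter_upwards [hf, hψ, (hlim b).eventually_lt_const (hg hb)] with t hft hψt hbt
    by_contra! hle
    linarith [hft hle]

noncomputable section

namespace Electrolyte

variable {ι : Type*} (s : Finset ι) (w a b z : ι → ℝ)

def conc (x φ : ℝ) (j : ι) : ℝ := exp (a j * x + b j - z j * φ)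

def concSum (x φ : ℝ) : ℝ := ∑ j ∈ s, w j * conc a b z x φ j

variable {s w a b z}

theorem rpow_mul_exp_eq_conc {c : ℝ} (hc : 0 < c) (φ : ℝ) (j : ι) :
    c ^ a j * exp (b j - z j * φ) = conc a b z (log c) φ j := by
  rw [rpow_def_of_pos hc, ← exp_add, conc]
  ring_nf

theorem sum_rpow_mul_exp_eq_concSum {c : ℝ} (hc : 0 < c) (φ : ℝ) :
    ∑ j ∈ s, w j * c ^ a j * exp (b j - z j * φ) = concSum s w a b z (log c) φ :=
  Finset.sum_congr rfl fun j _ => by rw [mul_assoc, rpow_mul_exp_eq_conc hc]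

theorem continuous_concSum {α : Type*} [TopologicalSpace α] {X Φ : α → ℝ}
    (hX : Continuous X) (hΦ : Continuous Φ) :
    Continuous fun t => concSum s w a b z (X t) (Φ t) := by
  unfold concSum conc
  fun_prop

variable {κ : ℝ}

theorem concSum_monotonicity_eq (hw : ∀ j ∈ s, w j = κ * a j) (x₁ x₂ φ₁ φ₂ : ℝ) :
    (x₂ - x₁) * (concSum s w a b z x₂ φ₂ - concSum s w a b z x₁ φ₁)
        - κ * (φ₂ - φ₁) * (concSum s z a b z x₂ φ₂ - concSum s z a b z x₁ φ₁)
      = κ * ∑ j ∈ s, (exp (a j * x₂ + b j - z j * φ₂) - exp (a j * x₁ + b j - z j * φ₁))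
          * ((a j * x₂ + b j - z j * φ₂) - (a j * x₁ + b j - z j * φ₁)) := by
  simp only [concSum, conc, ← Finset.sum_sub_distrib, Finset.mul_sum]
  refine Finset.sum_congr rfl fun j hj => ?_
  rw [hw j hj]
  ring

theorem concSum_monotonicity (hw : ∀ j ∈ s, w j = κ * a j) (hκ : 0 ≤ κ) (x₁ x₂ φ₁ φ₂ : ℝ) :
    κ * (φ₂ - φ₁) * (concSum s z a b z x₂ φ₂ - concSum s z a b z x₁ φ₁)
      ≤ (x₂ - x₁) * (concSum s w a b z x₂ φ₂ - concSum s w a b z x₁ φ₁) := by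
  rw [← sub_nonneg, concSum_monotonicity_eq hw]
  exact mul_nonneg hκ (Finset.sum_nonneg fun j _ => exp_sub_exp_mul_sub_nonneg _ _)

theorem eq_of_concSum_monotonicity_eq (hw : ∀ j ∈ s, w j = κ * a j) (hκ : κ ≠ 0)
    {x₁ x₂ φ₁ φ₂ : ℝ}
    (h : κ * (φ₂ - φ₁) * (concSum s z a b z x₂ φ₂ - concSum s z a b z x₁ φ₁)
      = (x₂ - x₁) * (concSum s w a b z x₂ φ₂ - concSum s w a b z x₁ φ₁)) :
    ∀ j ∈ s, a j * (x₂ - x₁) = z j * (φ₂ - φ₁) := by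
  have hsum := concSum_monotonicity_eq (b := b) (z := z) hw x₁ x₂ φ₁ φ₂
  rw [← h, sub_self, eq_comm, mul_eq_zero, or_iff_right hκ,
    Finset.sum_eq_zero_iff_of_nonneg fun j _ => exp_sub_exp_mul_sub_nonneg _ _] at hsum
  intro j hj
  have := eq_of_exp_sub_exp_mul_sub_eq_zero (hsum j hj)
  linarith

variable {j₀ : ι}

theorem strictMono_concSum_left (hw : ∀ j ∈ s, w j = κ * a j) (hκ : 0 < κ) (hj₀ : j₀ ∈ s)
    (ha₀ : a j₀ ≠ 0) (φ : ℝ) : StrictMono fun x => concSum s w a b z x φ := by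
  intro x₁ x₂ hx
  have hle := concSum_monotonicity (b := b) (z := z) hw hκ.le x₁ x₂ φ φ
  rw [sub_self, mul_zero, zero_mul] at hle
  refine lt_of_le_of_ne (le_of_sub_nonneg (nonneg_of_mul_nonneg_right hle (sub_pos.2 hx))) ?_
  intro heq
  have := eq_of_concSum_monotonicity_eq (b := b) (z := z) hw hκ.ne' (x₁ := x₁) (x₂ := x₂)
    (φ₁ := φ) (φ₂ := φ) (by simp only at heq; rw [heq]; ring) j₀ hj₀
  simp [ha₀, sub_eq_zero, hx.ne'] at this

theorem strictAnti_concSum_of_concSum_eq (hw : ∀ j ∈ s, w j = κ * a j) (hκ : 0 < κ)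
    (hj₀ : j₀ ∈ s) (ha₀ : a j₀ ≠ 0) (hz₀ : z j₀ = 0) {i : ι} (hi : i ∈ s) (hzi : z i ≠ 0)
    {X : ℝ → ℝ} {C : ℝ} (hX : ∀ φ, concSum s w a b z (X φ) φ = C) :
    StrictAnti fun φ => concSum s z a b z (X φ) φ := by
  intro φ₁ φ₂ hφ
  have hle := concSum_monotonicity (b := b) (z := z) hw hκ.le (X φ₁) (X φ₂) φ₁ φ₂
  rw [hX, hX, sub_self, mul_zero] at hle
  refine lt_of_le_of_ne (le_of_sub_nonpos
    (nonpos_of_mul_nonpos_right hle (mul_pos hκ (sub_pos.2 hφ)))) fun heq => ?_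
  have heq' := eq_of_concSum_monotonicity_eq (b := b) (z := z) hw hκ.ne' (x₁ := X φ₁)
    (x₂ := X φ₂) (φ₁ := φ₁) (φ₂ := φ₂) (by simp only at heq; rw [hX, hX, heq]; ring)
  have hx : X φ₂ - X φ₁ = 0 := by simpa [hz₀, ha₀] using heq' j₀ hj₀
  have := heq' i hi
  simp [hx, hzi, sub_eq_zero, hφ.ne'] at this

theorem antitone_concSum_of_add_mul_concSum_eq (hw : ∀ j ∈ s, w j = κ * a j) (hκ : 0 < κ)
    {X : ℝ → ℝ} {K C : ℝ} (hK : 0 < K) (hX : ∀ φ, X φ + K * concSum s w a b z (X φ) φ = C) :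
    Antitone fun φ => concSum s z a b z (X φ) φ := by
  refine antitone_iff_forall_lt.2 fun φ₁ φ₂ hφ => ?_
  have hle := concSum_monotonicity (b := b) (z := z) hw hκ.le (X φ₁) (X φ₂) φ₁ φ₂
  have hK' : K * ((X φ₂ - X φ₁) * (concSum s w a b z (X φ₂) φ₂ - concSum s w a b z (X φ₁) φ₁))
      = -(X φ₂ - X φ₁) ^ 2 := by linear_combination (X φ₂ - X φ₁) * (hX φ₂ - hX φ₁)
  have hrhs := nonpos_of_mul_nonpos_right (hK' ▸ neg_nonpos.2 (sq_nonneg _)) hK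
  exact sub_nonpos.1 (nonpos_of_mul_nonpos_right (hle.trans hrhs) (mul_pos hκ (sub_pos.2 hφ)))

theorem tendsto_concSum_of_add_mul_concSum_eq (hw : ∀ j ∈ s, w j = κ * a j) (hκ : 0 < κ)
    (hj₀ : j₀ ∈ s) (ha₀ : a j₀ ≠ 0) {X : ℝ → ℝ} {x₀ φ y β : ℝ}
    (hx₀ : concSum s w a b z x₀ φ = y)
    (hX : ∀ᶠ t in atTop, X t + t * κ * concSum s w a b z (X t) φ = t * κ * y + β) :
    Tendsto (fun t => concSum s z a b z (X t) φ) atTop (𝓝 (concSum s z a b z x₀ φ)) :=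
  ((continuous_concSum continuous_id continuous_const).tendsto x₀).comp
    (tendsto_of_add_mul_eq (strictMono_concSum_left hw hκ hj₀ ha₀ φ) hκ hx₀ hX)

theorem sum_Icc_eq_concSum_range {a b z : ℕ → ℝ} {N : ℕ} (hz₀ : z 0 = 0) {c : ℝ} (hc : 0 < c)
    (φ : ℝ) :
    ∑ i ∈ Finset.Icc 1 N, z i * (c ^ a i * exp (b i - z i * φ))
      = concSum (Finset.range (N + 1)) z a b z (log c) φ := by
  refine Finset.sum_subset (fun j hj => ?_) (fun j hj hj' => ?_) |>.trans
    (Finset.sum_congr rfl fun j _ => by rw [rpow_mul_exp_eq_conc hc])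
  · simp only [Finset.mem_Icc] at hj
    simp only [Finset.mem_range]
    omega
  · obtain rfl : j = 0 := by simp only [Finset.mem_range, Finset.mem_Icc] at hj hj'; omega
    simp [hz₀]

end Electrolyte

end

open Electrolyte in
theorem stmt19_general
    (N : ℕ)
    (z lam μhat : ℕ → ℝ) (μtilde0 : ℝ)
    (hz0 : z 0 = 0)
    (hmix : ∃ i j, 1 ≤ i ∧ i ≤ N ∧ 1 ≤ j ∧ j ≤ N ∧ z i * z j < 0)
    (hlam : ∀ i, i ≤ N → 0 < lam i)
    (μbar : ℕ → ℝ)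
    (c0 : ℝ → ℝ → ℝ)
    (hc0pos : ∀ Λ : ℝ, 0 < Λ → ∀ φ, 0 < c0 Λ φ)
    (hc0eq : ∀ Λ : ℝ, 0 < Λ → ∀ φ : ℝ, Real.log (c0 Λ φ)
        + Λ * lam 0 * ∑ j ∈ Finset.range (N+1),
            lam j * (c0 Λ φ) ^ (lam j / lam 0) * Real.exp (μbar j - z j * φ)
      = Λ * lam 0 * μtilde0 + μhat 0)
    (c0s : ℝ → ℝ) (hc0spos : ∀ φ, 0 < c0s φ)
    (hc0seq : ∀ φ : ℝ, ∑ j ∈ Finset.range (N+1),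
        lam j * (c0s φ) ^ (lam j / lam 0) * Real.exp (μbar j - z j * φ) = μtilde0)
    (mstar Mstar : ℝ)
    (hm : Filter.Tendsto (fun φ : ℝ => ∑ i ∈ Finset.Icc 1 N, z i * ((c0s φ) ^ (lam i / lam 0) * Real.exp (μbar i - z i * φ))) Filter.atTop (nhds mstar))
    (hM : Filter.Tendsto (fun φ : ℝ => ∑ i ∈ Finset.Icc 1 N, z i * ((c0s φ) ^ (lam i / lam 0) * Real.exp (μbar i - z i * φ))) Filter.atBot (nhds Mstar))
    (ρ₀ : ℝ) (hρ : -Mstar < ρ₀ ∧ ρ₀ < -mstar) :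
    (∃! φs : ℝ, ρ₀ + (∑ i ∈ Finset.Icc 1 N, z i * ((c0s φs) ^ (lam i / lam 0) * Real.exp (μbar i - z i * φs))) = 0) ∧
    (∀ φs : ℝ, ρ₀ + (∑ i ∈ Finset.Icc 1 N, z i * ((c0s φs) ^ (lam i / lam 0) * Real.exp (μbar i - z i * φs))) = 0 →
      ∀ φhat : ℝ → ℝ,
        (∀ Λ : ℝ, 0 < Λ → ρ₀ + (∑ i ∈ Finset.Icc 1 N, z i * (((c0 Λ) (φhat Λ)) ^ (lam i / lam 0) * Real.exp (μbar i - z i * (φhat Λ)))) = 0) →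
        Filter.Tendsto φhat Filter.atTop (nhds φs)) := by
  obtain ⟨i, j, hi₁, hiN, -, -, hzz⟩ := hmix
  have hzi : z i ≠ 0 := fun h => by simp [h] at hzz
  have hlam0 : 0 < lam 0 := hlam 0 N.zero_le
  set a : ℕ → ℝ := fun j => lam j / lam 0 with ha
  set s := Finset.range (N + 1)
  have hw : ∀ j ∈ s, lam j = lam 0 * a j := fun j _ => (mul_div_cancel₀ _ hlam0.ne').symm
  have ha0 : a 0 ≠ 0 := by simp [ha, hlam0.ne']
  have h0s : 0 ∈ s := by simp [s]
  have his : i ∈ s := by simp [s]; omega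
  have hxs (φ : ℝ) : concSum s lam a μbar z (log (c0s φ)) φ = μtilde0 :=
    sum_rpow_mul_exp_eq_concSum (hc0spos φ) φ ▸ hc0seq φ
  have hxΛ (Λ : ℝ) (hΛ : 0 < Λ) (φ : ℝ) : log (c0 Λ φ)
      + Λ * lam 0 * concSum s lam a μbar z (log (c0 Λ φ)) φ = Λ * lam 0 * μtilde0 + μhat 0 :=
    sum_rpow_mul_exp_eq_concSum (hc0pos Λ hΛ φ) φ ▸ hc0eq Λ hΛ φ
  simp only [sum_Icc_eq_concSum_range hz0 (hc0spos _)] at hm hM ⊢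
  set fs : ℝ → ℝ := fun φ => concSum s z a μbar z (log (c0s φ)) φ
  have hfs_anti : StrictAnti fs := strictAnti_concSum_of_concSum_eq hw hlam0 h0s ha0 hz0 his hzi hxs
  have hfs_cont : Continuous fs := continuous_concSum
    (continuous_of_strictMono_of_apply_eq (strictMono_concSum_left hw hlam0 h0s ha0)
      (fun x => continuous_concSum continuous_const continuous_id) hxs) continuous_id
  refine ⟨?_, fun φs hφs φhat hφhat => ?_⟩
  · obtain ⟨φs, hφs⟩ := mem_range_of_exists_le_of_exists_ge (c := -ρ₀) hfs_cont
      (hm.eventually_le_const (by linarith)).exists (hM.eventually_const_le (by linarith)).exists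
    exact ⟨φs, by linarith, fun φ hφ => hfs_anti.injective (by linarith)⟩
  · refine tendsto_of_antitone_of_tendsto_strictAnti
      (f := fun Λ φ => concSum s z a μbar z (log (c0 Λ φ)) φ) ?_ (fun φ => ?_) hfs_anti ?_
    · filter_upwards [eventually_gt_atTop 0] with Λ hΛ
      exact antitone_concSum_of_add_mul_concSum_eq hw hlam0 (mul_pos hΛ hlam0) (hxΛ Λ hΛ)
    · exact tendsto_concSum_of_add_mul_concSum_eq hw hlam0 h0s ha0 (hxs φ)
        ((eventually_gt_atTop 0).mono fun Λ hΛ => hxΛ Λ hΛ φ)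
    · filter_upwards [eventually_gt_atTop 0] with Λ hΛ
      linarith [hφhat Λ hΛ,
        sum_Icc_eq_concSum_range (N := N) (a := a) (b := μbar) hz0 (hc0pos Λ hΛ (φhat Λ)) (φhat Λ)]

theorem stmt19
    (N : ℕ) (hN : 1 ≤ N)
    (z lam μhat : ℕ → ℝ) (μtilde0 : ℝ)
    (hz0 : z 0 = 0)
    (hzne : ∀ i, 1 ≤ i → i ≤ N → z i ≠ 0)
    (hmix : ∃ i j, 1 ≤ i ∧ i ≤ N ∧ 1 ≤ j ∧ j ≤ N ∧ z i * z j < 0)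
    (hlam : ∀ i, i ≤ N → 0 < lam i)
    (hμt : 0 < μtilde0)
    (hμhat : ∀ i, i ≤ N → 0 < μhat i)
    (μbar : ℕ → ℝ) (hμbar : ∀ i, μbar i = μhat i - lam i / lam 0 * μhat 0)
    (c0 : ℝ → ℝ → ℝ)
    (hc0pos : ∀ Λ : ℝ, 0 < Λ → ∀ φ, 0 < c0 Λ φ)
    (hc0eq : ∀ Λ : ℝ, 0 < Λ → ∀ φ : ℝ, Real.log (c0 Λ φ)
        + Λ * lam 0 * ∑ j ∈ Finset.range (N+1),
            lam j * (c0 Λ φ) ^ (lam j / lam 0) * Real.exp (μbar j - z j * φ)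
      = Λ * lam 0 * μtilde0 + μhat 0)
    (c0s : ℝ → ℝ) (hc0spos : ∀ φ, 0 < c0s φ)
    (hc0seq : ∀ φ : ℝ, ∑ j ∈ Finset.range (N+1),
        lam j * (c0s φ) ^ (lam j / lam 0) * Real.exp (μbar j - z j * φ) = μtilde0)
    (mstar Mstar : ℝ)
    (hm : Filter.Tendsto (fun φ : ℝ => ∑ i ∈ Finset.Icc 1 N, z i * ((c0s φ) ^ (lam i / lam 0) * Real.exp (μbar i - z i * φ))) Filter.atTop (nhds mstar))
    (hM : Filter.Tendsto (fun φ : ℝ => ∑ i ∈ Finset.Icc 1 N, z i * ((c0s φ) ^ (lam i / lam 0) * Real.exp (μbar i - z i * φ))) Filter.atBot (nhds Mstar))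
    (ρ₀ : ℝ) (hρ : -Mstar < ρ₀ ∧ ρ₀ < -mstar) :
    (∃! φs : ℝ, ρ₀ + (∑ i ∈ Finset.Icc 1 N, z i * ((c0s φs) ^ (lam i / lam 0) * Real.exp (μbar i - z i * φs))) = 0) ∧
    (∀ φs : ℝ, ρ₀ + (∑ i ∈ Finset.Icc 1 N, z i * ((c0s φs) ^ (lam i / lam 0) * Real.exp (μbar i - z i * φs))) = 0 →
      ∀ φhat : ℝ → ℝ,
        (∀ Λ : ℝ, 0 < Λ → ρ₀ + (∑ i ∈ Finset.Icc 1 N, z i * (((c0 Λ) (φhat Λ)) ^ (lam i / lam 0) * Real.exp (μbar i - z i * (φhat Λ)))) = 0) →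
        Filter.Tendsto φhat Filter.atTop (nhds φs)) :=
  stmt19_general N z lam μhat μtilde0 hz0 hmix hlam μbar c0 hc0pos hc0eq c0s hc0spos hc0seq mstar
    Mstar hm hM ρ₀ hρ
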